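/- arXiv:2311.07800 — 5 statements merged into one kernel-verified Lean document; each statement's English description precedes it below -/
import Mathlib

section
/- Let 0 < γ ≤ 1, ρ ∈ (0,1) and γ(1−ρ) < A < γ. Set a = 0, b = A+γ and H(u) = G_γ(u−A) for u ∈ [0, A+γ]. Define v₂ : [0, A+γ] → ℝ by v₂(u) = (1 − A/γ)·u for 0 ≤ u ≤ γ−A, v₂(u) = G_γ(u−A) for γ−A ≤ u ≤ A+γ(2ρ−1), and v₂(u) = ρ·(u − A − γ(2ρ−1)) + γρ² for A+γ(2ρ−1) ≤ u ≤ A+γ. Then v₂ is admissible, and v₂ is the unique minimizer of the cost K_{0,A+γ} over all admissible functions: for every admissible v with v ≠ v₂ one has K_{0,A+γ}(v₂) < K_{0,A+γ}(v). -/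
open MeasureTheory

/-- `h_ρ(z) = z log(z/ρ) + (1-z) log((1-z)/(1-ρ))` (with `0 log 0 = 0`,
which holds automatically since `Real.log 0 = 0`). -/
noncomputable def hRho (ρ z : ℝ) : ℝ :=
  z * Real.log (z / ρ) + (1 - z) * Real.log ((1 - z) / (1 - ρ))

/-- `G_γ(z)`: `(γ/4)(1+z/γ)²` for `|z| ≤ γ`, `0` for `z < -γ`, `z` for `z > γ`. -/
noncomputable def Gfun (γ z : ℝ) : ℝ :=
  if z < -γ then 0 else if γ < z then z else γ / 4 * (1 + z / γ) ^ 2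

/-- `v` is admissible on `[a,b]` with obstacle `H`: differentiable on `[a,b]`,
`v a = 0`, `0 ≤ v' ≤ 1` on `[a,b]`, and `v ≤ H` on `[a,b]`. -/
def Admissible (a b : ℝ) (H v : ℝ → ℝ) : Prop :=
  DifferentiableOn ℝ v (Set.Icc a b) ∧ v a = 0 ∧
    (∀ u ∈ Set.Icc a b, derivWithin v (Set.Icc a b) u ∈ Set.Icc (0 : ℝ) 1) ∧
    ∀ u ∈ Set.Icc a b, v u ≤ H u

/-- The cost `K_{a,b}(v) = ∫_a^b h_ρ(v'(u)) du`. -/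
noncomputable def cost (ρ a b : ℝ) (v : ℝ → ℝ) : ℝ :=
  ∫ u in a..b, hRho ρ (derivWithin v (Set.Icc a b) u)

/-- The candidate minimizer `v₂` for `γ(1-ρ) < A < γ`. -/
noncomputable def v2 (γ ρ A : ℝ) (u : ℝ) : ℝ :=
  if u ≤ γ - A then (1 - A / γ) * u
  else if u ≤ A + γ * (2 * ρ - 1) then Gfun γ (u - A)
  else ρ * (u - (A + γ * (2 * ρ - 1))) + γ * ρ ^ 2

/-!
`hRho ρ` is strictly convex and its Bregman divergence is `hRho w` itself:
`hRho ρ z = hRho ρ w + hRhoDeriv ρ w * (z - w) + hRho w z`, where `hRho w z ≥ 0` with equality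
only at `z = w` (Gibbs). Taking `w = v₂'` splits `K(v) - K(v₂)` into `∫ φ (v' - v₂')` with
`φ = hRhoDeriv ρ ∘ v₂'`, plus `∫ hRho (v₂') (v')`, which is positive unless `v' = v₂'` a.e., i.e.
unless `v = v₂`. The weight `φ` is constant before the contact interval `[γ - A, A + γ(2ρ - 1)]`,
nondecreasing on it, and zero after it (there `v₂' = ρ`). Integrating by parts on each piece, the
boundary terms telescope to `φ(0) (v - v₂)(0) = 0`, and what remains is `-∫ φ' (v - v₂)` over the
contact interval, which is `≥ 0` because there `v ≤ H = v₂`.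
-/

open Set MeasureTheory InformationTheory intervalIntegral

lemma mul_log_div_eq_mul_klFun (x : ℝ) {c : ℝ} (hc : c ≠ 0) :
    x * Real.log (x / c) = c * klFun (x / c) + x - c := by
  rw [klFun_apply]
  field_simp
  ring

lemma mul_log_div_eq_add (x : ℝ) {c w : ℝ} (hc : c ≠ 0) (hw : w ≠ 0) :
    x * Real.log (x / c) = x * Real.log (x / w) + x * Real.log (w / c) := by
  rcases eq_or_ne x 0 with rfl | hx
  · simp
  rw [← mul_add, ← Real.log_mul (div_ne_zero hx hw) (div_ne_zero hw hc), div_mul_div_cancel₀ hw]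

lemma hRho_eq_klFun {w : ℝ} (hw₀ : w ≠ 0) (hw₁ : w ≠ 1) (z : ℝ) :
    hRho w z = w * klFun (z / w) + (1 - w) * klFun ((1 - z) / (1 - w)) := by
  rw [hRho, mul_log_div_eq_mul_klFun z hw₀, mul_log_div_eq_mul_klFun _ (sub_ne_zero.2 hw₁.symm)]
  ring

lemma continuous_hRho {ρ : ℝ} (hρ₀ : ρ ≠ 0) (hρ₁ : ρ ≠ 1) : Continuous (hRho ρ) := by
  simp_rw [funext (hRho_eq_klFun hρ₀ hρ₁)]
  fun_prop

lemma hRho_nonneg {w z : ℝ} (hw : w ∈ Ioo 0 1) (hz : z ∈ Icc 0 1) : 0 ≤ hRho w z := by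
  rw [hRho_eq_klFun hw.1.ne' hw.2.ne]
  have hw' : 0 < 1 - w := sub_pos.2 hw.2
  exact add_nonneg (mul_nonneg hw.1.le (klFun_nonneg (div_nonneg hz.1 hw.1.le)))
    (mul_nonneg hw'.le (klFun_nonneg (div_nonneg (sub_nonneg.2 hz.2) hw'.le)))

lemma eq_of_hRho_eq_zero {w z : ℝ} (hw : w ∈ Ioo 0 1) (hz : z ∈ Icc 0 1) (h : hRho w z = 0) :
    z = w := by
  rw [hRho_eq_klFun hw.1.ne' hw.2.ne] at h
  have hw' : 0 < 1 - w := sub_pos.2 hw.2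
  have h₁ := klFun_nonneg (div_nonneg hz.1 hw.1.le)
  have h₂ := klFun_nonneg (div_nonneg (sub_nonneg.2 hz.2) hw'.le)
  have hk : w * klFun (z / w) = 0 := by linarith [mul_nonneg hw.1.le h₁, mul_nonneg hw'.le h₂]
  rwa [mul_eq_zero, or_iff_right hw.1.ne', klFun_eq_zero_iff (div_nonneg hz.1 hw.1.le),
    div_eq_one_iff_eq hw.1.ne'] at hk

noncomputable def hRhoDeriv (ρ w : ℝ) : ℝ :=
  Real.log (w / ρ) - Real.log ((1 - w) / (1 - ρ))

lemma hRhoDeriv_self {ρ : ℝ} (hρ₀ : ρ ≠ 0) (hρ₁ : ρ ≠ 1) : hRhoDeriv ρ ρ = 0 := by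
  simp [hRhoDeriv, div_self hρ₀, div_self (sub_ne_zero.2 hρ₁.symm)]

lemma hRho_eq_add_hRhoDeriv_mul_add {ρ w : ℝ} (hρ₀ : ρ ≠ 0) (hρ₁ : ρ ≠ 1) (hw₀ : w ≠ 0)
    (hw₁ : w ≠ 1) (z : ℝ) :
    hRho ρ z = hRho ρ w + hRhoDeriv ρ w * (z - w) + hRho w z := by
  have hρ₁' := sub_ne_zero.2 hρ₁.symm
  have hw₁' := sub_ne_zero.2 hw₁.symm
  simp only [hRho, hRhoDeriv]
  rw [mul_log_div_eq_add z hρ₀ hw₀, mul_log_div_eq_add (1 - z) hρ₁' hw₁']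
  ring

lemma hasDerivAt_hRhoDeriv {ρ w : ℝ} (hρ₀ : ρ ≠ 0) (hρ₁ : ρ ≠ 1) (hw : w ∈ Ioo 0 1) :
    HasDerivAt (hRhoDeriv ρ) (w⁻¹ + (1 - w)⁻¹) w := by
  have hρ₁' := sub_ne_zero.2 hρ₁.symm
  have hw₁ : 1 - w ≠ 0 := (sub_pos.2 hw.2).ne'
  have h₁ := ((hasDerivAt_id w).div_const ρ).log (div_ne_zero hw.1.ne' hρ₀)
  have h₂ := (((hasDerivAt_id w).const_sub 1).div_const (1 - ρ)).log (div_ne_zero hw₁ hρ₁')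
  refine (h₁.sub h₂ : HasDerivAt (hRhoDeriv ρ) _ w).congr_deriv ?_
  simp only [id]
  field_simp
  ring

theorem hasDerivAt_ite_le {f₁ f₂ : ℝ → ℝ} {c x d : ℝ} (h₁ : x ≤ c → HasDerivAt f₁ d x)
    (h₂ : c ≤ x → HasDerivAt f₂ d x) (hc : f₁ c = f₂ c) :
    HasDerivAt (fun u => if u ≤ c then f₁ u else f₂ u) d x := by
  rcases lt_trichotomy x c with hx | rfl | hx
  · refine (h₁ hx.le).congr_of_eventuallyEq ?_
    filter_upwards [Iic_mem_nhds hx] with u hu using if_pos hu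
  · have hl : HasDerivWithinAt (fun u => if u ≤ x then f₁ u else f₂ u) d (Iic x) x :=
      (h₁ le_rfl).hasDerivWithinAt.congr (fun u hu => if_pos hu) (if_pos le_rfl)
    have hr : HasDerivWithinAt (fun u => if u ≤ x then f₁ u else f₂ u) d (Ici x) x := by
      refine (h₂ le_rfl).hasDerivWithinAt.congr (fun u (hu : x ≤ u) => ?_) (by simp [hc])
      split_ifs with h
      · rw [le_antisymm h hu, hc]
      · rfl
    simpa [Iic_union_Ici] using hl.union hr
  · refine (h₂ hx.le).congr_of_eventuallyEq ?_
    filter_upwards [Ioi_mem_nhds hx] with u hu using if_neg (not_le.2 hu)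

theorem le_integral_mul_deriv_of_deriv_mul_nonpos {ψ ψ' g g' : ℝ → ℝ} {a b : ℝ} (hab : a ≤ b)
    (hψ : ∀ x ∈ Icc a b, HasDerivAt ψ (ψ' x) x) (hψ' : IntervalIntegrable ψ' volume a b)
    (hg : ContinuousOn g (Icc a b)) (hg' : ∀ x ∈ Ioo a b, HasDerivAt g (g' x) x)
    (hg'i : IntervalIntegrable g' volume a b) (hψg : ∀ x ∈ Icc a b, ψ' x * g x ≤ 0) :
    ψ b * g b - ψ a * g a ≤ ∫ x in a..b, ψ x * g' x := by
  rw [← uIcc_of_le hab] at hψ hg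
  rw [integral_mul_deriv_eq_deriv_mul_of_hasDerivAt
    (fun x hx => (hψ x hx).continuousAt.continuousWithinAt) hg
    (fun x hx => hψ x (Ioo_subset_Icc_self hx)) (by rwa [min_eq_left hab, max_eq_right hab]) hψ'
    hg'i]
  have := integral_nonneg (μ := volume) hab fun x hx => neg_nonneg.2 (hψg x hx)
  simp only [intervalIntegral.integral_neg, neg_nonneg] at this
  linarith

theorem integral_pos_of_exists_ne {F d₁ d₂ f₁ f₂ : ℝ → ℝ} {a b : ℝ} (hab : a ≤ b)
    (hF : IntervalIntegrable F volume a b) (hF₀ : ∀ u ∈ Icc a b, 0 ≤ F u)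
    (hFd : ∀ u ∈ Icc a b, F u = 0 → d₁ u = d₂ u)
    (hf₁ : ∀ t ∈ Icc a b, ∫ u in a..t, d₁ u = f₁ t)
    (hf₂ : ∀ t ∈ Icc a b, ∫ u in a..t, d₂ u = f₂ t)
    (hne : ∃ t ∈ Icc a b, f₁ t ≠ f₂ t) :
    0 < ∫ u in a..b, F u := by
  refine (integral_nonneg hab hF₀).lt_of_ne fun h₀ => ?_
  obtain ⟨t, ht, hne⟩ := hne
  have hae := (integral_eq_zero_iff_of_le_of_nonneg_ae hab
    (ae_restrict_of_forall_mem measurableSet_Ioc fun u hu => hF₀ u (Ioc_subset_Icc_self hu)) hF).1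
    h₀.symm
  rw [Filter.EventuallyEq, ae_restrict_iff' measurableSet_Ioc] at hae
  refine hne ((hf₁ t ht).symm.trans (Eq.trans ?_ (hf₂ t ht)))
  refine integral_congr_ae ?_
  filter_upwards [hae] with u hu hut
  rw [uIoc_of_le ht.1] at hut
  have hub : u ∈ Ioc a b := ⟨hut.1, hut.2.trans ht.2⟩
  exact hFd u (Ioc_subset_Icc_self hub) (hu hub)

theorem Continuous.comp_intervalIntegrable_of_mem {f g : ℝ → ℝ} {a b : ℝ} {s : Set ℝ}
    (hg : Continuous g) (hab : a ≤ b) (hs : IsCompact s) (hf : IntervalIntegrable f volume a b)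
    (hfs : ∀ u ∈ Ioc a b, f u ∈ s) :
    IntervalIntegrable (g ∘ f) volume a b := by
  obtain ⟨C, hC⟩ := hs.exists_bound_of_continuousOn hg.continuousOn
  rw [intervalIntegrable_iff_integrableOn_Ioc_of_le hab] at hf ⊢
  exact (integrable_const C).mono' (hg.comp_aestronglyMeasurable hf.aestronglyMeasurable)
    (ae_restrict_of_forall_mem measurableSet_Ioc fun u hu => hC _ (hfs u hu))

namespace Admissible

variable {a b : ℝ} {H v : ℝ → ℝ}

lemma hasDerivAt (hv : Admissible a b H v) {u : ℝ} (hu : u ∈ Ioo a b) :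
    HasDerivAt v (derivWithin v (Icc a b) u) u :=
  (hv.1 u (Ioo_subset_Icc_self hu)).hasDerivWithinAt.hasDerivAt (Icc_mem_nhds hu.1 hu.2)

lemma intervalIntegrable_derivWithin (hv : Admissible a b H v) (hab : a ≤ b) :
    IntervalIntegrable (derivWithin v (Icc a b)) volume a b :=
  (intervalIntegrable_iff_integrableOn_Ioc_of_le hab).2 <|
    integrableOn_deriv_of_nonneg hv.1.continuousOn (fun _ hu => hv.hasDerivAt hu)
      fun u hu => (hv.2.2.1 u (Ioo_subset_Icc_self hu)).1

lemma integral_derivWithin (hv : Admissible a b H v) {t : ℝ} (ht : t ∈ Icc a b) :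
    ∫ u in a..t, derivWithin v (Icc a b) u = v t := by
  have hint := (hv.intervalIntegrable_derivWithin (ht.1.trans ht.2)).mono_set
    (uIcc_subset_uIcc left_mem_uIcc (mem_uIcc_of_le ht.1 ht.2))
  rw [integral_eq_sub_of_hasDerivAt_of_le ht.1
    (hv.1.continuousOn.mono (Icc_subset_Icc_right ht.2))
    (fun u hu => hv.hasDerivAt ⟨hu.1, hu.2.trans_le ht.2⟩) hint, hv.2.1, sub_zero]

lemma intervalIntegrable_hRho (hv : Admissible a b H v) (hab : a ≤ b) {ρ : ℝ}
    (hρ : ρ ∈ Ioo 0 1) :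
    IntervalIntegrable (fun u => hRho ρ (derivWithin v (Icc a b) u)) volume a b :=
  (continuous_hRho hρ.1.ne' hρ.2.ne).comp_intervalIntegrable_of_mem hab isCompact_Icc
    (hv.intervalIntegrable_derivWithin hab) fun u hu => hv.2.2.1 u (Ioc_subset_Icc_self hu)

theorem le_integral_mul_derivWithin_sub {H' w ψ ψ' : ℝ → ℝ} {s t : ℝ}
    (hv : Admissible a b H v) (hw : Admissible a b H' w) (hs : a ≤ s) (hst : s ≤ t) (ht : t ≤ b)
    (hψ : ∀ x ∈ Icc s t, HasDerivAt ψ (ψ' x) x) (hψ' : IntervalIntegrable ψ' volume s t)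
    (hψg : ∀ x ∈ Icc s t, ψ' x * (v x - w x) ≤ 0) :
    ψ t * (v t - w t) - ψ s * (v s - w s) ≤
      ∫ x in s..t, ψ x * (derivWithin v (Icc a b) x - derivWithin w (Icc a b) x) := by
  have hsub : Icc s t ⊆ Icc a b := Icc_subset_Icc hs ht
  have hint : uIcc s t ⊆ uIcc a b := by
    rw [uIcc_of_le hst, uIcc_of_le (hs.trans (hst.trans ht))]
    exact hsub
  refine le_integral_mul_deriv_of_deriv_mul_nonpos hst hψ hψ'
    ((hv.1.continuousOn.sub hw.1.continuousOn).mono hsub)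
    (fun x hx => (hv.hasDerivAt ?_).sub (hw.hasDerivAt ?_))
    (((hv.intervalIntegrable_derivWithin (hs.trans (hst.trans ht))).sub
      (hw.intervalIntegrable_derivWithin (hs.trans (hst.trans ht)))).mono_set hint) hψg
  all_goals exact ⟨hs.trans_lt hx.1, hx.2.trans_le ht⟩

end Admissible

structure Regime (γ ρ A : ℝ) : Prop where
  γ_pos : 0 < γ
  ρ_pos : 0 < ρ
  ρ_lt_one : ρ < 1
  lt_A : γ * (1 - ρ) < A
  A_lt : A < γ

noncomputable def obstacleDeriv (γ A u : ℝ) : ℝ := (1 + (u - A) / γ) / 2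

noncomputable def v2Deriv (γ ρ A u : ℝ) : ℝ := max (1 - A / γ) (min (obstacleDeriv γ A u) ρ)

lemma Gfun_of_abs_le {γ z : ℝ} (hz : |z| ≤ γ) : Gfun γ z = γ / 4 * (1 + z / γ) ^ 2 := by
  rw [abs_le] at hz
  rw [Gfun, if_neg (not_lt.2 hz.1), if_neg (not_lt.2 hz.2)]

lemma hasDerivAt_Gfun {γ z : ℝ} (hz : |z| < γ) : HasDerivAt (Gfun γ) ((1 + z / γ) / 2) z := by
  have hγ : γ ≠ 0 := ((abs_nonneg z).trans_lt hz).ne'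
  have hq := ((((hasDerivAt_id z).div_const γ).const_add 1).pow 2).const_mul (γ / 4)
  refine (hq.congr_deriv ?_).congr_of_eventuallyEq ?_
  · norm_num
    field_simp
    ring
  · filter_upwards [(isOpen_lt continuous_abs continuous_const).mem_nhds hz] with y hy
    exact Gfun_of_abs_le hy.le

lemma obstacleDeriv_eq_slope_add {γ : ℝ} (hγ : γ ≠ 0) (A u : ℝ) :
    obstacleDeriv γ A u = 1 - A / γ + (u - (γ - A)) / (2 * γ) := by
  rw [obstacleDeriv]
  field_simp
  ring

lemma obstacleDeriv_eq_add {γ : ℝ} (hγ : γ ≠ 0) (ρ A u : ℝ) :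
    obstacleDeriv γ A u = ρ + (u - (A + γ * (2 * ρ - 1))) / (2 * γ) := by
  rw [obstacleDeriv]
  field_simp
  ring

lemma obstacleDeriv_contactStart {γ : ℝ} (hγ : γ ≠ 0) (A : ℝ) :
    obstacleDeriv γ A (γ - A) = 1 - A / γ := by
  simp [obstacleDeriv_eq_slope_add hγ]

lemma obstacleDeriv_contactEnd {γ : ℝ} (hγ : γ ≠ 0) (ρ A : ℝ) :
    obstacleDeriv γ A (A + γ * (2 * ρ - 1)) = ρ := by
  simp [obstacleDeriv_eq_add hγ ρ]

lemma hasDerivAt_obstacleDeriv (γ A u : ℝ) : HasDerivAt (obstacleDeriv γ A) (γ⁻¹ / 2) u := by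
  unfold obstacleDeriv
  simpa using ((((hasDerivAt_id u).sub_const A).div_const γ).const_add 1).div_const 2

lemma continuous_v2Deriv (γ ρ A : ℝ) : Continuous (v2Deriv γ ρ A) := by
  unfold v2Deriv obstacleDeriv
  fun_prop

namespace Regime

variable {γ ρ A : ℝ}

lemma ρ_mem (h : Regime γ ρ A) : ρ ∈ Ioo 0 1 := ⟨h.ρ_pos, h.ρ_lt_one⟩

lemma A_pos (h : Regime γ ρ A) : 0 < A :=
  lt_trans (mul_pos h.γ_pos (sub_pos.2 h.ρ_lt_one)) h.lt_A

lemma length_pos (h : Regime γ ρ A) : 0 < A + γ := add_pos h.A_pos h.γ_pos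

lemma contactStart_pos (h : Regime γ ρ A) : 0 < γ - A := sub_pos.2 h.A_lt

lemma contactStart_lt_contactEnd (h : Regime γ ρ A) : γ - A < A + γ * (2 * ρ - 1) := by
  linarith [h.lt_A]

lemma contactEnd_lt (h : Regime γ ρ A) : A + γ * (2 * ρ - 1) < A + γ := by
  nlinarith [h.γ_pos, h.ρ_lt_one]

lemma slope_pos (h : Regime γ ρ A) : 0 < 1 - A / γ :=
  sub_pos.2 ((div_lt_one h.γ_pos).2 h.A_lt)

lemma slope_lt (h : Regime γ ρ A) : 1 - A / γ < ρ := by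
  have : 1 - ρ < A / γ := (lt_div_iff₀ h.γ_pos).2 (by linarith [h.lt_A])
  linarith

lemma abs_sub_le (h : Regime γ ρ A) {u : ℝ} (hu : u ∈ Icc 0 (A + γ)) : |u - A| ≤ γ :=
  abs_le.2 ⟨by linarith [hu.1, h.A_lt], by linarith [hu.2]⟩

lemma abs_sub_lt (h : Regime γ ρ A) {u : ℝ} (hu : u ∈ Icc (γ - A) (A + γ * (2 * ρ - 1))) :
    |u - A| < γ :=
  abs_lt.2 ⟨by linarith [hu.1, h.A_lt], by linarith [hu.2, h.contactEnd_lt]⟩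

lemma v2Deriv_of_le (h : Regime γ ρ A) {u : ℝ} (hu : u ≤ γ - A) :
    v2Deriv γ ρ A u = 1 - A / γ := by
  have : (u - (γ - A)) / (2 * γ) ≤ 0 :=
    div_nonpos_of_nonpos_of_nonneg (by linarith) (by linarith [h.γ_pos])
  refine max_eq_left ((min_le_left _ _).trans ?_)
  rw [obstacleDeriv_eq_slope_add h.γ_pos.ne']
  linarith

lemma v2Deriv_of_mem (h : Regime γ ρ A) {u : ℝ} (hu : u ∈ Icc (γ - A) (A + γ * (2 * ρ - 1))) :
    v2Deriv γ ρ A u = obstacleDeriv γ A u := by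
  have h₁ : 0 ≤ (u - (γ - A)) / (2 * γ) := div_nonneg (by linarith [hu.1]) (by linarith [h.γ_pos])
  have h₂ : (u - (A + γ * (2 * ρ - 1))) / (2 * γ) ≤ 0 :=
    div_nonpos_of_nonpos_of_nonneg (by linarith [hu.2]) (by linarith [h.γ_pos])
  rw [v2Deriv, min_eq_left, max_eq_right]
  · rw [obstacleDeriv_eq_slope_add h.γ_pos.ne']
    linarith
  · rw [obstacleDeriv_eq_add h.γ_pos.ne' ρ]
    linarith

lemma v2Deriv_of_ge (h : Regime γ ρ A) {u : ℝ} (hu : A + γ * (2 * ρ - 1) ≤ u) :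
    v2Deriv γ ρ A u = ρ := by
  have : 0 ≤ (u - (A + γ * (2 * ρ - 1))) / (2 * γ) :=
    div_nonneg (by linarith) (by linarith [h.γ_pos])
  have hρ : ρ ≤ obstacleDeriv γ A u := by
    rw [obstacleDeriv_eq_add h.γ_pos.ne' ρ]
    linarith
  rw [v2Deriv, min_eq_right hρ, max_eq_right h.slope_lt.le]

lemma v2Deriv_mem (h : Regime γ ρ A) (u : ℝ) : v2Deriv γ ρ A u ∈ Ioo 0 1 :=
  ⟨h.slope_pos.trans_le (le_max_left _ _),
    max_lt (h.slope_lt.trans h.ρ_lt_one) ((min_le_right _ _).trans_lt h.ρ_lt_one)⟩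

lemma continuous_hRhoDeriv_v2Deriv (h : Regime γ ρ A) :
    Continuous fun u => hRhoDeriv ρ (v2Deriv γ ρ A u) :=
  ContinuousOn.comp_continuous
    (fun _ hw =>
      (hasDerivAt_hRhoDeriv h.ρ_pos.ne' h.ρ_lt_one.ne hw).continuousAt.continuousWithinAt)
    (continuous_v2Deriv γ ρ A) h.v2Deriv_mem

lemma v2_zero (h : Regime γ ρ A) : v2 γ ρ A 0 = 0 := by
  simp [v2, h.contactStart_pos.le]

lemma v2_eq_Gfun (h : Regime γ ρ A) {u : ℝ} (hu : u ∈ Icc (γ - A) (A + γ * (2 * ρ - 1))) :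
    v2 γ ρ A u = Gfun γ (u - A) := by
  have hγ := h.γ_pos.ne'
  rw [v2]
  split_ifs with h₁ h₂
  · obtain rfl : u = γ - A := le_antisymm h₁ hu.1
    rw [Gfun_of_abs_le (h.abs_sub_lt hu).le]
    field_simp
    ring
  · rfl
  · exact absurd hu.2 h₂

lemma v2_le_Gfun (h : Regime γ ρ A) {u : ℝ} (hu : u ∈ Icc 0 (A + γ)) :
    v2 γ ρ A u ≤ Gfun γ (u - A) := by
  have hγ := h.γ_pos
  rw [Gfun_of_abs_le (h.abs_sub_le hu), v2]
  split_ifs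
  · have key : γ / 4 * (1 + (u - A) / γ) ^ 2 - (1 - A / γ) * u
        = (u - (γ - A)) ^ 2 / (4 * γ) := by
      field_simp
      ring
    linarith [div_nonneg (sq_nonneg (u - (γ - A))) (by linarith : (0 : ℝ) ≤ 4 * γ)]
  · exact (Gfun_of_abs_le (h.abs_sub_le hu)).le
  · have key : γ / 4 * (1 + (u - A) / γ) ^ 2 - (ρ * (u - (A + γ * (2 * ρ - 1))) + γ * ρ ^ 2)
        = (u - (A + γ * (2 * ρ - 1))) ^ 2 / (4 * γ) := by
      field_simp
      ring
    linarith [div_nonneg (sq_nonneg (u - (A + γ * (2 * ρ - 1)))) (by linarith : (0 : ℝ) ≤ 4 * γ)]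

lemma hasDerivAt_v2 (h : Regime γ ρ A) (x : ℝ) : HasDerivAt (v2 γ ρ A) (v2Deriv γ ρ A x) x := by
  have hγ := h.γ_pos.ne'
  have hc := h.contactStart_lt_contactEnd
  unfold v2
  refine hasDerivAt_ite_le (fun hx => ?_)
    (fun hx => hasDerivAt_ite_le (fun hx' => ?_) (fun hx' => ?_) ?_) ?_
  · rw [h.v2Deriv_of_le hx]
    simpa using (hasDerivAt_id x).const_mul (1 - A / γ)
  · rw [h.v2Deriv_of_mem ⟨hx, hx'⟩]
    exact (hasDerivAt_Gfun (h.abs_sub_lt ⟨hx, hx'⟩)).comp_sub_const x A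
  · rw [h.v2Deriv_of_ge hx']
    simpa using (((hasDerivAt_id x).sub_const (A + γ * (2 * ρ - 1))).const_mul ρ).add_const
      (γ * ρ ^ 2)
  · rw [Gfun_of_abs_le (h.abs_sub_lt ⟨hc.le, le_rfl⟩).le]
    field_simp
    ring
  · rw [if_pos hc.le, Gfun_of_abs_le (h.abs_sub_lt ⟨le_rfl, hc.le⟩).le]
    field_simp
    ring

lemma derivWithin_v2 (h : Regime γ ρ A) {u : ℝ} (hu : u ∈ Icc 0 (A + γ)) :
    derivWithin (v2 γ ρ A) (Icc 0 (A + γ)) u = v2Deriv γ ρ A u :=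
  (h.hasDerivAt_v2 u).hasDerivWithinAt.derivWithin
    (uniqueDiffOn_Icc h.length_pos u hu)

lemma integral_v2Deriv (h : Regime γ ρ A) (t : ℝ) :
    ∫ u in (0)..t, v2Deriv γ ρ A u = v2 γ ρ A t := by
  rw [integral_eq_sub_of_hasDerivAt (fun x _ => h.hasDerivAt_v2 x)
    ((continuous_v2Deriv γ ρ A).intervalIntegrable _ _), h.v2_zero, sub_zero]

lemma admissible_v2 (h : Regime γ ρ A) :
    Admissible 0 (A + γ) (fun u => Gfun γ (u - A)) (v2 γ ρ A) :=
  ⟨fun u _ => (h.hasDerivAt_v2 u).differentiableAt.differentiableWithinAt, h.v2_zero,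
    fun u hu => h.derivWithin_v2 hu ▸ Ioo_subset_Icc_self (h.v2Deriv_mem u),
    fun _ hu => h.v2_le_Gfun hu⟩

variable {v : ℝ → ℝ}

lemma le_integral_before_contact (h : Regime γ ρ A)
    (hv : Admissible 0 (A + γ) (fun u => Gfun γ (u - A)) v) :
    hRhoDeriv ρ (1 - A / γ) * (v (γ - A) - v2 γ ρ A (γ - A)) ≤
      ∫ u in (0)..(γ - A), hRhoDeriv ρ (v2Deriv γ ρ A u) *
        (derivWithin v (Icc 0 (A + γ)) u - v2Deriv γ ρ A u) := by
  have hc := h.contactStart_pos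
  have := hv.le_integral_mul_derivWithin_sub h.admissible_v2 le_rfl hc.le
    (by linarith [h.contactStart_lt_contactEnd, h.contactEnd_lt])
    (fun x _ => hasDerivAt_const x (hRhoDeriv ρ (1 - A / γ))) intervalIntegrable_const
    (fun x _ => by rw [zero_mul])
  rw [hv.2.1, h.v2_zero, sub_zero, mul_zero, sub_zero] at this
  refine this.trans_eq (integral_congr fun u hu => ?_)
  rw [uIcc_of_le hc.le] at hu
  simp only [h.derivWithin_v2 (u := u) ⟨hu.1, by linarith [hu.2, h.A_pos]⟩, h.v2Deriv_of_le hu.2]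

lemma le_integral_on_contact (h : Regime γ ρ A)
    (hv : Admissible 0 (A + γ) (fun u => Gfun γ (u - A)) v) :
    -(hRhoDeriv ρ (1 - A / γ) * (v (γ - A) - v2 γ ρ A (γ - A))) ≤
      ∫ u in (γ - A)..(A + γ * (2 * ρ - 1)), hRhoDeriv ρ (v2Deriv γ ρ A u) *
        (derivWithin v (Icc 0 (A + γ)) u - v2Deriv γ ρ A u) := by
  have hγ := h.γ_pos.ne'
  have hc := h.contactStart_lt_contactEnd
  set I := Icc (γ - A) (A + γ * (2 * ρ - 1))
  have hm : ∀ x ∈ I, obstacleDeriv γ A x ∈ Ioo 0 1 := fun x hx =>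
    h.v2Deriv_of_mem hx ▸ h.v2Deriv_mem x
  set ψ' : ℝ → ℝ := fun x => ((obstacleDeriv γ A x)⁻¹ + (1 - obstacleDeriv γ A x)⁻¹) * (γ⁻¹ / 2)
  have hψ'c : ContinuousOn ψ' I := by
    have hmc : Continuous (obstacleDeriv γ A) := by unfold obstacleDeriv; fun_prop
    refine ((hmc.continuousOn.inv₀ fun x hx => (hm x hx).1.ne').add
      ((continuous_const.sub hmc).continuousOn.inv₀ fun x hx => ?_)).mul continuousOn_const
    exact (sub_pos.2 (hm x hx).2).ne'
  have := hv.le_integral_mul_derivWithin_sub h.admissible_v2 h.contactStart_pos.le hc.le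
    h.contactEnd_lt.le (ψ := fun x => hRhoDeriv ρ (obstacleDeriv γ A x)) (ψ' := ψ')
    (fun x hx => (hasDerivAt_hRhoDeriv h.ρ_pos.ne' h.ρ_lt_one.ne (hm x hx)).comp x
      (hasDerivAt_obstacleDeriv γ A x))
    (hψ'c.intervalIntegrable_of_Icc hc.le) fun x hx => ?_
  · rw [obstacleDeriv_contactStart hγ, obstacleDeriv_contactEnd hγ,
      hRhoDeriv_self h.ρ_pos.ne' h.ρ_lt_one.ne, zero_mul, zero_sub] at this
    refine this.trans_eq (integral_congr fun u hu => ?_)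
    rw [uIcc_of_le hc.le] at hu
    simp only [h.derivWithin_v2 (u := u) ⟨by linarith [hu.1, h.contactStart_pos],
      by linarith [hu.2, h.contactEnd_lt]⟩, h.v2Deriv_of_mem hu]
  · have hψ' : 0 ≤ ψ' x :=
      mul_nonneg
        (add_nonneg (inv_nonneg.2 (hm x hx).1.le) (inv_nonneg.2 (sub_pos.2 (hm x hx).2).le))
        (div_nonneg (inv_nonneg.2 h.γ_pos.le) zero_le_two)
    refine mul_nonpos_of_nonneg_of_nonpos hψ' (sub_nonpos.2 ?_)
    rw [h.v2_eq_Gfun hx]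
    exact hv.2.2.2 x ⟨by linarith [hx.1, h.contactStart_pos], by linarith [hx.2, h.contactEnd_lt]⟩

lemma integral_after_contact (h : Regime γ ρ A) (V' : ℝ → ℝ) :
    ∫ u in (A + γ * (2 * ρ - 1))..(A + γ),
      hRhoDeriv ρ (v2Deriv γ ρ A u) * (V' u - v2Deriv γ ρ A u) = 0 := by
  refine (integral_congr fun u hu => ?_).trans integral_zero
  rw [uIcc_of_le h.contactEnd_lt.le] at hu
  simp only [h.v2Deriv_of_ge hu.1, hRhoDeriv_self h.ρ_pos.ne' h.ρ_lt_one.ne, zero_mul]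

lemma intervalIntegrable_hRhoDeriv_mul_sub (h : Regime γ ρ A)
    (hv : Admissible 0 (A + γ) (fun u => Gfun γ (u - A)) v) :
    IntervalIntegrable (fun u => hRhoDeriv ρ (v2Deriv γ ρ A u) *
      (derivWithin v (Icc 0 (A + γ)) u - v2Deriv γ ρ A u)) volume 0 (A + γ) :=
  ((hv.intervalIntegrable_derivWithin h.length_pos.le).sub
    ((continuous_v2Deriv γ ρ A).intervalIntegrable _ _)).continuousOn_mul
      h.continuous_hRhoDeriv_v2Deriv.continuousOn

lemma integral_hRhoDeriv_mul_sub_nonneg (h : Regime γ ρ A)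
    (hv : Admissible 0 (A + γ) (fun u => Gfun γ (u - A)) v) :
    0 ≤ ∫ u in (0)..(A + γ), hRhoDeriv ρ (v2Deriv γ ρ A u) *
      (derivWithin v (Icc 0 (A + γ)) u - v2Deriv γ ρ A u) := by
  have hc₁ := h.contactStart_pos
  have hc₁₂ := h.contactStart_lt_contactEnd
  have hc₂ := h.contactEnd_lt
  have hi := h.intervalIntegrable_hRhoDeriv_mul_sub hv
  have hsub : ∀ {s t : ℝ}, 0 ≤ s → s ≤ t → t ≤ A + γ → uIcc s t ⊆ uIcc 0 (A + γ) :=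
    fun hs hst ht =>
      uIcc_subset_uIcc (mem_uIcc_of_le hs (hst.trans ht)) (mem_uIcc_of_le (hs.trans hst) ht)
  rw [← integral_add_adjacent_intervals (hi.mono_set (hsub le_rfl (hc₁.le.trans hc₁₂.le) hc₂.le))
      (hi.mono_set (hsub (hc₁.le.trans hc₁₂.le) hc₂.le le_rfl)),
    ← integral_add_adjacent_intervals (hi.mono_set (hsub le_rfl hc₁.le (hc₁₂.trans hc₂).le))
      (hi.mono_set (hsub hc₁.le hc₁₂.le hc₂.le)), h.integral_after_contact]
  linarith [h.le_integral_before_contact hv, h.le_integral_on_contact hv]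

lemma hRho_v2Deriv_eq (h : Regime γ ρ A) (u z : ℝ) :
    hRho (v2Deriv γ ρ A u) z = hRho ρ z - hRho ρ (v2Deriv γ ρ A u) -
      hRhoDeriv ρ (v2Deriv γ ρ A u) * (z - v2Deriv γ ρ A u) := by
  rw [hRho_eq_add_hRhoDeriv_mul_add h.ρ_pos.ne' h.ρ_lt_one.ne (h.v2Deriv_mem u).1.ne'
    (h.v2Deriv_mem u).2.ne z]
  ring

lemma continuous_hRho_v2Deriv (h : Regime γ ρ A) :
    Continuous fun u => hRho ρ (v2Deriv γ ρ A u) :=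
  (continuous_hRho h.ρ_pos.ne' h.ρ_lt_one.ne).comp (continuous_v2Deriv γ ρ A)

lemma intervalIntegrable_hRho_v2Deriv (h : Regime γ ρ A)
    (hv : Admissible 0 (A + γ) (fun u => Gfun γ (u - A)) v) :
    IntervalIntegrable (fun u => hRho (v2Deriv γ ρ A u) (derivWithin v (Icc 0 (A + γ)) u))
      volume 0 (A + γ) := by
  simp_rw [h.hRho_v2Deriv_eq]
  exact ((hv.intervalIntegrable_hRho h.length_pos.le h.ρ_mem).sub
    (h.continuous_hRho_v2Deriv.intervalIntegrable _ _)).sub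
      (h.intervalIntegrable_hRhoDeriv_mul_sub hv)

lemma cost_sub_cost_v2 (h : Regime γ ρ A)
    (hv : Admissible 0 (A + γ) (fun u => Gfun γ (u - A)) v) :
    cost ρ 0 (A + γ) v - cost ρ 0 (A + γ) (v2 γ ρ A) =
      (∫ u in (0)..(A + γ), hRhoDeriv ρ (v2Deriv γ ρ A u) *
        (derivWithin v (Icc 0 (A + γ)) u - v2Deriv γ ρ A u)) +
      ∫ u in (0)..(A + γ), hRho (v2Deriv γ ρ A u) (derivWithin v (Icc 0 (A + γ)) u) := by
  have hb := h.length_pos.le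
  have hcost : cost ρ 0 (A + γ) (v2 γ ρ A) = ∫ u in (0)..(A + γ), hRho ρ (v2Deriv γ ρ A u) :=
    integral_congr fun u hu => by rw [h.derivWithin_v2 (uIcc_of_le hb ▸ hu)]
  rw [hcost, cost, ← integral_sub (hv.intervalIntegrable_hRho hb h.ρ_mem)
      (h.continuous_hRho_v2Deriv.intervalIntegrable _ _),
    ← integral_add (h.intervalIntegrable_hRhoDeriv_mul_sub hv)
      (h.intervalIntegrable_hRho_v2Deriv hv)]
  congr 1
  ext u
  rw [h.hRho_v2Deriv_eq]
  ring

lemma integral_hRho_v2Deriv_pos (h : Regime γ ρ A)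
    (hv : Admissible 0 (A + γ) (fun u => Gfun γ (u - A)) v)
    (hne : ∃ u ∈ Icc 0 (A + γ), v u ≠ v2 γ ρ A u) :
    0 < ∫ u in (0)..(A + γ), hRho (v2Deriv γ ρ A u) (derivWithin v (Icc 0 (A + γ)) u) :=
  integral_pos_of_exists_ne h.length_pos.le (h.intervalIntegrable_hRho_v2Deriv hv)
    (fun u hu => hRho_nonneg (h.v2Deriv_mem u) (hv.2.2.1 u hu))
    (fun u hu => eq_of_hRho_eq_zero (h.v2Deriv_mem u) (hv.2.2.1 u hu))
    (fun _ ht => hv.integral_derivWithin ht) (fun t _ => h.integral_v2Deriv t) hne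

end Regime

theorem stmt1_general (γ ρ A : ℝ) (hγ0 : 0 < γ)
    (hρ0 : 0 < ρ) (hρ1 : ρ < 1) (hA1 : γ * (1 - ρ) < A) (hA2 : A < γ) :
    Admissible 0 (A + γ) (fun u => Gfun γ (u - A)) (v2 γ ρ A) ∧
    ∀ v : ℝ → ℝ,
      Admissible 0 (A + γ) (fun u => Gfun γ (u - A)) v →
      (∃ u ∈ Set.Icc (0 : ℝ) (A + γ), v u ≠ v2 γ ρ A u) →
      cost ρ 0 (A + γ) (v2 γ ρ A) < cost ρ 0 (A + γ) v := by
  have h : Regime γ ρ A := ⟨hγ0, hρ0, hρ1, hA1, hA2⟩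
  refine ⟨h.admissible_v2, fun v hv hne => ?_⟩
  rw [← sub_pos, h.cost_sub_cost_v2 hv]
  exact add_pos_of_nonneg_of_pos (h.integral_hRhoDeriv_mul_sub_nonneg hv)
    (h.integral_hRho_v2Deriv_pos hv hne)

theorem stmt1 (γ ρ A : ℝ) (hγ0 : 0 < γ) (hγ1 : γ ≤ 1)
    (hρ0 : 0 < ρ) (hρ1 : ρ < 1) (hA1 : γ * (1 - ρ) < A) (hA2 : A < γ) :
    Admissible 0 (A + γ) (fun u => Gfun γ (u - A)) (v2 γ ρ A) ∧
    ∀ v : ℝ → ℝ,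
      Admissible 0 (A + γ) (fun u => Gfun γ (u - A)) v →
      (∃ u ∈ Set.Icc (0 : ℝ) (A + γ), v u ≠ v2 γ ρ A u) →
      cost ρ 0 (A + γ) (v2 γ ρ A) < cost ρ 0 (A + γ) v :=
  stmt1_general γ ρ A hγ0 hρ0 hρ1 hA1 hA2
end

section
/- Let a < b, ρ ∈ (0,1), and let H : [a,b] → ℝ be any function. If v and w are both admissible and both attain the infimum of K_{a,b} over all admissible functions, i.e. K_{a,b}(v) = K_{a,b}(w) = inf{K_{a,b}(u) : u admissible}, then v(u) = w(u) for all u ∈ [a,b]. (The cost functional is strictly convex in the derivative and the admissible set is convex, so there is at most one minimizer.) -/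
open MeasureTheory

lemma hRho_eq {ρ : ℝ} (hρ0 : 0 < ρ) (hρ1 : ρ < 1) (z : ℝ) :
    hRho ρ z = z * Real.log z + (1 - z) * Real.log (1 - z)
      - (z * Real.log ρ + (1 - z) * Real.log (1 - ρ)) := by
  have hρ : ρ ≠ 0 := hρ0.ne'
  have hρ' : (1 - ρ) ≠ 0 := by intro h; nlinarith
  unfold hRho
  rcases eq_or_ne z 0 with rfl | hz
  · simp [Real.log_div one_ne_zero hρ']
  rcases eq_or_ne z 1 with rfl | hz1
  · simp [Real.log_div one_ne_zero hρ]
  · rw [Real.log_div hz hρ, Real.log_div (by intro h; apply hz1; linarith) hρ']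
    ring

lemma mul_log_midpoint_lt {p q : ℝ} (hp : 0 ≤ p) (hq : 0 ≤ q) (hpq : p ≠ q) :
    ((p + q) / 2) * Real.log ((p + q) / 2)
      < (p * Real.log p + q * Real.log q) / 2 := by
  have h := Real.strictConvexOn_mul_log.2 (Set.mem_Ici.2 hp) (Set.mem_Ici.2 hq) hpq
    (by norm_num : (0:ℝ) < 1/2) (by norm_num : (0:ℝ) < 1/2) (by norm_num)
  simp only [smul_eq_mul] at h
  have e : (p + q) / 2 = 1/2 * p + 1/2 * q := by ring
  rw [e]
  linarith

lemma hRho_midpoint_lt {ρ : ℝ} (hρ0 : 0 < ρ) (hρ1 : ρ < 1) {x y : ℝ}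
    (hx : x ∈ Set.Icc (0:ℝ) 1) (hy : y ∈ Set.Icc (0:ℝ) 1) (hne : x ≠ y) :
    hRho ρ ((x + y) / 2) < (hRho ρ x + hRho ρ y) / 2 := by
  have h1 := mul_log_midpoint_lt hx.1 hy.1 hne
  have h2 := mul_log_midpoint_lt (by linarith [hx.2] : (0:ℝ) ≤ 1 - x)
    (by linarith [hy.2] : (0:ℝ) ≤ 1 - y) (by intro h; apply hne; linarith)
  rw [show ((1 - x) + (1 - y)) / 2 = 1 - (x + y) / 2 from by ring] at h2
  simp only [hRho_eq hρ0 hρ1]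
  nlinarith [h1, h2]

lemma hRho_midpoint_le {ρ : ℝ} (hρ0 : 0 < ρ) (hρ1 : ρ < 1) {x y : ℝ}
    (hx : x ∈ Set.Icc (0:ℝ) 1) (hy : y ∈ Set.Icc (0:ℝ) 1) :
    hRho ρ ((x + y) / 2) ≤ (hRho ρ x + hRho ρ y) / 2 := by
  rcases eq_or_ne x y with rfl | hne
  · rw [show (x + x) / 2 = x from by ring]; linarith
  · exact (hRho_midpoint_lt hρ0 hρ1 hx hy hne).le

lemma continuous_hRho_s6 {ρ : ℝ} (hρ0 : 0 < ρ) (hρ1 : ρ < 1) : Continuous (hRho ρ) := by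
  have : hRho ρ = fun z => z * Real.log z + (1 - z) * Real.log (1 - z)
      - (z * Real.log ρ + (1 - z) * Real.log (1 - ρ)) := funext (hRho_eq hρ0 hρ1)
  rw [this]
  have h1 : Continuous fun z : ℝ => z * Real.log z := Real.continuous_mul_log
  have h2 : Continuous fun z : ℝ => (1 - z) * Real.log (1 - z) :=
    Real.continuous_mul_log.comp (continuous_const.sub continuous_id)
  fun_prop

theorem stmt6 (a b ρ : ℝ) (H v w : ℝ → ℝ) (hab : a < b) (hρ0 : 0 < ρ) (hρ1 : ρ < 1)
    (hv : Admissible a b H v) (hw : Admissible a b H w)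
    (hvw : cost ρ a b v = cost ρ a b w)
    (hmin : ∀ z : ℝ → ℝ, Admissible a b H z → cost ρ a b v ≤ cost ρ a b z) :
    ∀ u ∈ Set.Icc a b, v u = w u := by
  obtain ⟨hv1, hv2, hv3, hv4⟩ := hv
  obtain ⟨hw1, hw2, hw3, hw4⟩ := hw
  have hs : UniqueDiffOn ℝ (Set.Icc a b) := uniqueDiffOn_Icc hab
  set m : ℝ → ℝ := fun u => (v u + w u) / 2 with hm
  have hm1 : DifferentiableOn ℝ m (Set.Icc a b) := (hv1.add hw1).div_const 2
  have hmderiv : ∀ u ∈ Set.Icc a b, derivWithin m (Set.Icc a b) u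
      = (derivWithin v (Set.Icc a b) u + derivWithin w (Set.Icc a b) u) / 2 := by
    intro u hu
    exact (((hv1 u hu).hasDerivWithinAt.add (hw1 u hu).hasDerivWithinAt).div_const
      2).derivWithin (hs u hu)
  have hmAdm : Admissible a b H m := by
    refine ⟨hm1, by simp [hm, hv2, hw2], ?_, ?_⟩
    · intro u hu
      rw [hmderiv u hu]
      have h3 := hv3 u hu; have h4 := hw3 u hu
      rw [Set.mem_Icc] at h3 h4 ⊢
      constructor <;> [linarith [h3.1, h4.1]; linarith [h3.2, h4.2]]
    · intro u hu
      have := hv4 u hu; have := hw4 u hu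
      simp only [hm]; linarith
  -- a.e. equality of derivWithin with deriv on (a,b]
  have key : ∀ f : ℝ → ℝ, DifferentiableOn ℝ f (Set.Icc a b) →
      (fun u => derivWithin f (Set.Icc a b) u)
        =ᵐ[volume.restrict (Set.Ioc a b)] (fun u => deriv f u) := by
    intro f hf
    have hres : volume.restrict (Set.Ioc a b) = volume.restrict (Set.Ioo a b) :=
      (Measure.restrict_congr_set Ioo_ae_eq_Ioc).symm
    rw [hres]
    filter_upwards [ae_restrict_mem measurableSet_Ioo] with u hu
    have hd : HasDerivAt f (derivWithin f (Set.Icc a b) u) u :=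
      ((hf u (Set.Ioo_subset_Icc_self hu)).hasDerivWithinAt).hasDerivAt
        (Icc_mem_nhds hu.1 hu.2)
    exact hd.deriv.symm
  have hhm : Measurable (hRho ρ) := (continuous_hRho_s6 hρ0 hρ1).measurable
  -- integrability of the cost integrands
  obtain ⟨C, hC⟩ := (isCompact_Icc (a := (0:ℝ)) (b := 1)).exists_bound_of_continuousOn
    (continuous_hRho_s6 hρ0 hρ1).continuousOn
  have hint : ∀ f : ℝ → ℝ, DifferentiableOn ℝ f (Set.Icc a b) →
      (∀ u ∈ Set.Icc a b, derivWithin f (Set.Icc a b) u ∈ Set.Icc (0:ℝ) 1) →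
      IntervalIntegrable (fun u => hRho ρ (derivWithin f (Set.Icc a b) u)) volume a b := by
    intro f hf hf3
    have hmeas : AEStronglyMeasurable (fun u => hRho ρ (derivWithin f (Set.Icc a b) u))
        (volume.restrict (Set.Ioc a b)) :=
      ((hhm.comp (measurable_deriv f)).aestronglyMeasurable).congr
        (((key f hf).fun_comp (hRho ρ)).symm)
    apply (intervalIntegrable_const (c := C)).mono_fun
    · rwa [Set.uIoc_of_le hab.le]
    · rw [Set.uIoc_of_le hab.le]
      filter_upwards [ae_restrict_mem measurableSet_Ioc] with u hu
      exact (hC _ (hf3 u (Set.Ioc_subset_Icc_self hu))).trans (le_abs_self C)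
  have hintv := hint v hv1 hv3
  have hintw := hint w hw1 hw3
  have hintm := hint m hm1 hmAdm.2.2.1
  -- the convexity-gap function
  set F : ℝ → ℝ := fun u =>
    (hRho ρ (derivWithin v (Set.Icc a b) u) + hRho ρ (derivWithin w (Set.Icc a b) u)) / 2
      - hRho ρ (derivWithin m (Set.Icc a b) u) with hF
  have hFint : IntervalIntegrable F volume a b :=
    ((hintv.add hintw).div_const 2).sub hintm
  have hFnonneg : ∀ u ∈ Set.Icc a b, 0 ≤ F u := by
    intro u hu
    have := hRho_midpoint_le hρ0 hρ1 (hv3 u hu) (hw3 u hu)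
    simp only [hF, hmderiv u hu]
    linarith
  have hsplit : ∫ u in a..b, F u = (cost ρ a b v + cost ρ a b w) / 2 - cost ρ a b m := by
    rw [intervalIntegral.integral_sub ((hintv.add hintw).div_const 2) hintm,
      intervalIntegral.integral_div, intervalIntegral.integral_add hintv hintw]
    rfl
  have hge : cost ρ a b v ≤ cost ρ a b m := hmin m hmAdm
  have hzero : ∫ u in a..b, F u = 0 := by
    have h1 : ∫ u in a..b, F u ≤ 0 := by rw [hsplit]; linarith
    have h2 : 0 ≤ ∫ u in a..b, F u :=
      intervalIntegral.integral_nonneg hab.le fun u hu => hFnonneg u hu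
    linarith
  have hFae : F =ᵐ[volume.restrict (Set.Ioc a b)] 0 := by
    refine (intervalIntegral.integral_eq_zero_iff_of_le_of_nonneg_ae hab.le ?_ hFint).1 hzero
    filter_upwards [ae_restrict_mem measurableSet_Ioc] with u hu
    exact hFnonneg u (Set.Ioc_subset_Icc_self hu)
  -- derivatives agree a.e.
  have hDeq : (fun u => derivWithin v (Set.Icc a b) u)
      =ᵐ[volume.restrict (Set.Ioc a b)] (fun u => derivWithin w (Set.Icc a b) u) := by
    filter_upwards [hFae, ae_restrict_mem measurableSet_Ioc] with u hF0 hu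
    by_contra hne
    have hu' := Set.Ioc_subset_Icc_self hu
    have hlt := hRho_midpoint_lt hρ0 hρ1 (hv3 u hu') (hw3 u hu') hne
    simp only [hF, hmderiv u hu', Pi.zero_apply] at hF0
    linarith
  -- FTC
  have hFTC : ∀ f : ℝ → ℝ, DifferentiableOn ℝ f (Set.Icc a b) →
      (∀ u ∈ Set.Icc a b, derivWithin f (Set.Icc a b) u ∈ Set.Icc (0:ℝ) 1) →
      ∀ x ∈ Set.Icc a b, f x - f a = ∫ u in a..x, derivWithin f (Set.Icc a b) u := by
    intro f hf hf3 x hx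
    have hint' : IntervalIntegrable (fun u => derivWithin f (Set.Icc a b) u) volume a x := by
      have hmeas : AEStronglyMeasurable (fun u => derivWithin f (Set.Icc a b) u)
          (volume.restrict (Set.Ioc a x)) :=
        (((measurable_deriv f).aestronglyMeasurable).congr (key f hf).symm).mono_measure
          (Measure.restrict_mono (Set.Ioc_subset_Ioc_right hx.2) le_rfl)
      apply (intervalIntegrable_const (c := (1:ℝ))).mono_fun
      · rwa [Set.uIoc_of_le hx.1]
      · rw [Set.uIoc_of_le hx.1]
        filter_upwards [ae_restrict_mem measurableSet_Ioc] with u hu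
        have h3 := hf3 u (Set.Ioc_subset_Icc_self
          (Set.Ioc_subset_Ioc_right hx.2 hu))
        rw [Set.mem_Icc] at h3
        rw [Real.norm_eq_abs, norm_one, abs_le]
        exact ⟨by linarith [h3.1], h3.2⟩
    rw [intervalIntegral.integral_eq_sub_of_hasDeriv_right_of_le hx.1
      (hf.continuousOn.mono (Set.Icc_subset_Icc_right hx.2)) ?_ hint']
    intro y hy
    have hy' : y ∈ Set.Ioo a b := ⟨hy.1, lt_of_lt_of_le hy.2 hx.2⟩
    have hd : HasDerivAt f (derivWithin f (Set.Icc a b) y) y :=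
      ((hf y (Set.Ioo_subset_Icc_self hy')).hasDerivWithinAt).hasDerivAt
        (Icc_mem_nhds hy'.1 hy'.2)
    exact hd.hasDerivWithinAt
  intro x hx
  have h1 := hFTC v hv1 hv3 x hx
  have h2 := hFTC w hw1 hw3 x hx
  have heq : ∫ u in a..x, derivWithin v (Set.Icc a b) u
      = ∫ u in a..x, derivWithin w (Set.Icc a b) u := by
    rw [intervalIntegral.integral_of_le hx.1, intervalIntegral.integral_of_le hx.1]
    exact integral_congr_ae
      (ae_restrict_of_ae_restrict_of_subset (Set.Ioc_subset_Ioc_right hx.2) hDeq)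
  rw [hv2] at h1; rw [hw2] at h2
  linarith
end

section
/- Let γ > 0. For every r ∈ [0,1], the supremum over z ∈ ℝ of r·z − G_γ(z) equals −γ·r·(1−r); moreover this supremum is already attained on the interval [−γ, γ], i.e. sup_{−γ ≤ z ≤ γ} {r·z − G_γ(z)} = −γ·r·(1−r). -/
lemma stmt8_ub (γ : ℝ) (hγ : 0 < γ) (r : ℝ) (hr : r ∈ Set.Icc (0 : ℝ) 1) (z : ℝ) :
    r * z - Gfun γ z ≤ -γ * r * (1 - r) := by
  obtain ⟨hr0, hr1⟩ := hr
  unfold Gfun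
  split_ifs with h1 h2
  · nlinarith [mul_le_mul_of_nonneg_left h1.le hr0, mul_nonneg hγ.le (mul_nonneg hr0 hr0)]
  · nlinarith [mul_le_mul_of_nonneg_left h2.le (sub_nonneg.mpr hr1), mul_nonneg hγ.le (sq_nonneg (r - 1))]
  · push_neg at h1 h2
    have hz : z / γ * γ = z := div_mul_cancel₀ z hγ.ne'
    nlinarith [sq_nonneg ((1 + z / γ) / 2 - r), sq_nonneg (z / γ)]

lemma stmt8_mem (γ : ℝ) (hγ : 0 < γ) (r : ℝ) (hr : r ∈ Set.Icc (0 : ℝ) 1) :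
    r * (γ * (2 * r - 1)) - Gfun γ (γ * (2 * r - 1)) = -γ * r * (1 - r) := by
  obtain ⟨hr0, hr1⟩ := hr
  have h1 : ¬ γ * (2 * r - 1) < -γ := by nlinarith
  have h2 : ¬ γ < γ * (2 * r - 1) := by nlinarith
  unfold Gfun
  rw [if_neg h1, if_neg h2]
  have hz : γ * (2 * r - 1) / γ = 2 * r - 1 := by field_simp
  rw [hz]; ring

/-- The convex conjugate of `G_γ` recovers `L_γ(r) = -γ r (1-r)` for `r ∈ [0,1]`;
moreover the supremum over all of `ℝ` is already attained on `[-γ, γ]`. -/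
theorem stmt8 (γ : ℝ) (hγ : 0 < γ) (r : ℝ) (hr : r ∈ Set.Icc (0 : ℝ) 1) :
    sSup (Set.range fun z => r * z - Gfun γ z) = -γ * r * (1 - r) ∧
    sSup ((fun z => r * z - Gfun γ z) '' Set.Icc (-γ) γ) = -γ * r * (1 - r) := by
  obtain ⟨hr0, hr1⟩ := hr
  have hz0 : γ * (2 * r - 1) ∈ Set.Icc (-γ) γ := by
    constructor <;> nlinarith
  constructor
  · apply IsGreatest.csSup_eq
    constructor
    · exact ⟨γ * (2 * r - 1), stmt8_mem γ hγ r ⟨hr0, hr1⟩⟩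
    · rintro x ⟨z, rfl⟩
      exact stmt8_ub γ hγ r ⟨hr0, hr1⟩ z
  · apply IsGreatest.csSup_eq
    constructor
    · exact ⟨γ * (2 * r - 1), hz0, stmt8_mem γ hγ r ⟨hr0, hr1⟩⟩
    · rintro x ⟨z, _, rfl⟩
      exact stmt8_ub γ hγ r ⟨hr0, hr1⟩ z
end

section
/- Let γ > 0, t > 0 and u ∈ ℝ. Let v₀ : ℝ → ℝ be nondecreasing and 1-Lipschitz. Then the supremum over y ∈ ℝ of v₀(y) − t·G_γ((y−u)/t) is finite and is attained at some point y* ∈ [u − tγ, u + tγ]: there exists y* in this interval with v₀(y*) − t·G_γ((y*−u)/t) = sup_{y ∈ ℝ} {v₀(y) − t·G_γ((y−u)/t)}. -/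
theorem exists_mem_Icc_isMaxOn_univ {α β : Type*} [LinearOrder α] [TopologicalSpace α]
    [CompactIccSpace α] [LinearOrder β] [TopologicalSpace β] [ClosedIciTopology β]
    {f : α → β} {a b : α} (hab : a ≤ b) (hf : ContinuousOn f (Set.Icc a b))
    (hleft : ∀ y ≤ a, f y ≤ f a) (hright : ∀ y, b ≤ y → f y ≤ f b) :
    ∃ c ∈ Set.Icc a b, IsMaxOn f Set.univ c := by
  obtain ⟨c, hc, hmax⟩ := isCompact_Icc.exists_isMaxOn (Set.nonempty_Icc.2 hab) hf
  refine ⟨c, hc, fun y _ => ?_⟩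
  rcases le_total y a with hya | hay
  · exact (hleft y hya).trans (hmax (Set.left_mem_Icc.2 hab))
  rcases le_total y b with hyb | hby
  · exact hmax ⟨hay, hyb⟩
  · exact (hright y hby).trans (hmax (Set.right_mem_Icc.2 hab))

namespace Gfun

variable {γ : ℝ}

theorem of_le_neg (hγ : 0 < γ) {z : ℝ} (hz : z ≤ -γ) : Gfun γ z = 0 := by
  rcases hz.lt_or_eq with hz | rfl
  · simp [Gfun, hz]
  · simp [Gfun, show ¬γ < -γ by linarith, neg_div, div_self hγ.ne']

theorem of_ge (hγ : 0 < γ) {z : ℝ} (hz : γ ≤ z) : Gfun γ z = z := by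
  rcases hz.lt_or_eq with hz | rfl
  · simp [Gfun, hz, show ¬z < -γ by linarith]
  · simp [Gfun, show ¬γ < -γ by linarith, div_self hγ.ne']
    ring

theorem eq_clamp (hγ : 0 < γ) (z : ℝ) :
    Gfun γ z = γ / 4 * (1 + max (-γ) (min γ z) / γ) ^ 2 + max 0 (z - γ) := by
  rcases le_total z (-γ) with hz | hz
  · rw [of_le_neg hγ hz, min_eq_right (by linarith), max_eq_left hz,
      max_eq_left (by linarith), neg_div, div_self hγ.ne']
    ring
  rcases le_total γ z with hz' | hz'
  · rw [of_ge hγ hz', min_eq_left hz', max_eq_right (by linarith), max_eq_right (by linarith),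
      div_self hγ.ne']
    ring
  · rw [min_eq_right hz', max_eq_right hz, max_eq_left (by linarith), add_zero, Gfun,
      if_neg (by linarith), if_neg (by linarith)]

theorem continuous (hγ : 0 < γ) : Continuous (Gfun γ) := by
  simp_rw [funext (eq_clamp hγ)]
  fun_prop

end Gfun

theorem mul_Gfun_div_of_le {γ t u y : ℝ} (hγ : 0 < γ) (ht : 0 < t) (hy : y ≤ u - t * γ) :
    t * Gfun γ ((y - u) / t) = 0 := by
  rw [Gfun.of_le_neg hγ ((div_le_iff₀ ht).2 (by linarith)), mul_zero]

theorem mul_Gfun_div_of_ge {γ t u y : ℝ} (hγ : 0 < γ) (ht : 0 < t) (hy : u + t * γ ≤ y) :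
    t * Gfun γ ((y - u) / t) = y - u := by
  rw [Gfun.of_ge hγ ((le_div_iff₀ ht).2 (by linarith)), mul_div_cancel₀ _ ht.ne']

/-- Hopf–Lax: for `v₀` nondecreasing and 1-Lipschitz, the supremum of
`y ↦ v₀(y) - t G_γ((y-u)/t)` is finite and attained at some `y* ∈ [u - tγ, u + tγ]`. -/
theorem stmt10 (γ t u : ℝ) (hγ : 0 < γ) (ht : 0 < t) (v₀ : ℝ → ℝ)
    (hmono : Monotone v₀) (hlip : LipschitzWith 1 v₀) :
    ∃ ystar ∈ Set.Icc (u - t * γ) (u + t * γ),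
      IsGreatest (Set.range fun y => v₀ y - t * Gfun γ ((y - u) / t))
        (v₀ ystar - t * Gfun γ ((ystar - u) / t)) := by
  have hcont : Continuous fun y => v₀ y - t * Gfun γ ((y - u) / t) := by
    have := Gfun.continuous hγ
    have := hlip.continuous
    fun_prop
  obtain ⟨c, hc, hmax⟩ := exists_mem_Icc_isMaxOn_univ (a := u - t * γ) (b := u + t * γ)
    (by nlinarith) hcont.continuousOn
    (fun y hy => by
      rw [mul_Gfun_div_of_le hγ ht hy, mul_Gfun_div_of_le hγ ht le_rfl]
      exact sub_le_sub_right (hmono hy) 0)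
    (fun y hy => by
      rw [mul_Gfun_div_of_ge hγ ht hy, mul_Gfun_div_of_ge hγ ht le_rfl]
      have := hlip.le_add_mul y (u + t * γ)
      rw [NNReal.coe_one, one_mul, Real.dist_eq, abs_of_nonneg (by linarith)] at this
      linarith)
  exact ⟨c, hc, Set.mem_range_self c, Set.forall_mem_range.2 fun y => hmax (Set.mem_univ y)⟩
end

section
/- Define f(u) = u(1−u), h(u) = u·log(u) + (1−u)·log(1−u), and g(u) = u(1−u)·log(u/(1−u)) − u. For all 0 < R < L < 1, the following identity holds: g(R) − g(L) − ((f(R) − f(L))/(R − L))·(h(R) − h(L)) = L − R + L·R·log(R/L) + (1−L)(1−R)·log((1−L)/(1−R)). -/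
/-- Jensen–Varadhan cost identity: with `f(u) = u(1-u)`,
`h(u) = u log u + (1-u) log(1-u)`, `g(u) = u(1-u) log(u/(1-u)) - u`, for
`0 < R < L < 1`:
`g(R) - g(L) - ((f(R)-f(L))/(R-L)) (h(R)-h(L))
  = L - R + L R log(R/L) + (1-L)(1-R) log((1-L)/(1-R))`. -/
theorem stmt15 (L R : ℝ) (hR : 0 < R) (hRL : R < L) (hL : L < 1) :
    (R * (1 - R) * Real.log (R / (1 - R)) - R)
      - (L * (1 - L) * Real.log (L / (1 - L)) - L)
      - (R * (1 - R) - L * (1 - L)) / (R - L)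
        * ((R * Real.log R + (1 - R) * Real.log (1 - R))
            - (L * Real.log L + (1 - L) * Real.log (1 - L)))
      = L - R + L * R * Real.log (R / L)
          + (1 - L) * (1 - R) * Real.log ((1 - L) / (1 - R)) := by
  have hRne : R ≠ 0 := hR.ne'
  have hLne : L ≠ 0 := (hR.trans hRL).ne'
  have h1R : (1 : ℝ) - R ≠ 0 := by nlinarith
  have h1L : (1 : ℝ) - L ≠ 0 := by nlinarith
  have hRL' : R - L ≠ 0 := by nlinarith
  have key : (R * (1 - R) - L * (1 - L)) / (R - L) = 1 - R - L := by
    field_simp; ring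
  rw [key, Real.log_div hRne h1R, Real.log_div hLne h1L,
    Real.log_div hRne hLne, Real.log_div h1L h1R]
  ring
end
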